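/- arXiv:2406.07831 — 3 statements merged into one kernel-verified Lean document; each statement's English description precedes it below -/
import Mathlib

section
/- Let H be a symmetric positive semidefinite n×n matrix, ρ > 0, and D, V, G ∈ ℝ^{n×m}. Define W = (H + ρI)^{-1}(G - V + ρD). Then the Frobenius norm of W - D + V/ρ is at most (1/ρ)(‖G - H D‖_F + ‖H V‖_F / ρ). -/
open scoped Classical

/-- Frobenius norm of a real matrix. -/
noncomputable def frob {n m : ℕ} (A : Matrix (Fin n) (Fin m) ℝ) : ℝ :=
  Real.sqrt (∑ i, ∑ j, (A i j) ^ 2)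

/-- Spectral norm (operator 2-norm, largest singular value) of a real matrix. -/
noncomputable def spec {n m : ℕ} (A : Matrix (Fin n) (Fin m) ℝ) : ℝ :=
  ‖LinearMap.toContinuousLinearMap (Matrix.toEuclideanLin A)‖

/-- Number of nonzero entries of a matrix (the ℓ₀-"norm"). -/
noncomputable def l0 {n m : ℕ} (A : Matrix (Fin n) (Fin m) ℝ) : ℕ :=
  (Finset.univ.filter fun p : Fin n × Fin m => A p.1 p.2 ≠ 0).card

/-! With `M = H + ρ • 1`, the identity `M⁻¹ * M = 1` rewrites `W - D + ρ⁻¹ • V` as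
`M⁻¹ * (G - H * D + ρ⁻¹ • (H * V))`. Since `H` is symmetric and positive semidefinite,
`‖M * Z‖² = ‖H * Z‖² + 2ρ tr(Zᵀ H Z) + ρ² ‖Z‖² ≥ ρ² ‖Z‖²` in the Frobenius norm, so `M⁻¹` shrinks
Frobenius norms by the factor `ρ⁻¹`; the triangle inequality finishes. -/

open Matrix

attribute [local instance] Matrix.frobeniusNormedAddCommGroup Matrix.frobeniusNormedSpace

lemma frob_eq_frobenius_norm {n m : ℕ} (A : Matrix (Fin n) (Fin m) ℝ) : frob A = ‖A‖ := by
  simp [frob, frobenius_norm_def, Real.sqrt_eq_rpow, Real.norm_eq_abs, sq_abs]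

namespace Matrix

variable {m n : Type*} [Fintype m]

lemma PosSemidef.isUnit_det_add_smul_one [DecidableEq m] {H : Matrix m m ℝ} (hH : H.PosSemidef)
    {ρ : ℝ} (hρ : 0 < ρ) : IsUnit (H + ρ • 1).det :=
  (isUnit_iff_isUnit_det _).mp (PosDef.posSemidef_add hH (PosDef.one.smul hρ)).isUnit

lemma inv_add_smul_one_mul_sub_add_smul {K : Type*} [Field K] [DecidableEq m]
    {H : Matrix m m K} {ρ : K} (hρ : ρ ≠ 0) (hdet : IsUnit (H + ρ • 1).det)
    (D V G : Matrix m n K) :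
    (H + ρ • 1)⁻¹ * (G - V + ρ • D) - D + ρ⁻¹ • V =
      (H + ρ • 1)⁻¹ * (G - H * D + ρ⁻¹ • (H * V)) := by
  have hrhs : G - H * D + ρ⁻¹ • (H * V) =
      (G - V + ρ • D) - (H + ρ • 1) * D + ρ⁻¹ • ((H + ρ • 1) * V) := by
    simp only [Matrix.add_mul, smul_mul, Matrix.one_mul, smul_add, smul_smul,
      inv_mul_cancel₀ hρ, one_smul]
    abel
  rw [hrhs]
  simp only [Matrix.mul_add, Matrix.mul_sub, Matrix.mul_smul, nonsing_inv_mul_cancel_left _ _ hdet]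

variable [Fintype n]

lemma frobenius_norm_sq_eq_trace (A : Matrix m n ℝ) : ‖A‖ ^ 2 = (Aᵀ * A).trace := by
  rw [frobenius_norm_def, ← Real.sqrt_eq_rpow, Real.sq_sqrt (by positivity), Finset.sum_comm]
  simp only [Real.rpow_two, Real.norm_eq_abs, sq, abs_mul_abs_self, trace, diag_apply, mul_apply,
    transpose_apply]

lemma mul_frobenius_norm_le_norm_add_smul_one_mul [DecidableEq m] {H : Matrix m m ℝ}
    (hH : H.PosSemidef) {ρ : ℝ} (hρ : 0 ≤ ρ) (Z : Matrix m n ℝ) :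
    ρ * ‖Z‖ ≤ ‖(H + ρ • 1) * Z‖ := by
  have hquad : 0 ≤ (Zᵀ * H * Z).trace := by
    simpa using (hH.conjTranspose_mul_mul_same Z).trace_nonneg
  have hexpand : ‖(H + ρ • 1) * Z‖ ^ 2 =
      ‖H * Z‖ ^ 2 + 2 * ρ * (Zᵀ * H * Z).trace + ρ ^ 2 * ‖Z‖ ^ 2 := by
    have hHt : Hᵀ = H := by simpa using hH.isHermitian.eq
    rw [Matrix.add_mul, smul_mul, Matrix.one_mul]
    simp only [frobenius_norm_sq_eq_trace, transpose_add, transpose_smul, transpose_mul, hHt,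
      Matrix.add_mul, Matrix.mul_add, smul_mul, Matrix.mul_smul, trace_add, trace_smul,
      Matrix.mul_assoc, smul_eq_mul]
    ring
  apply le_of_sq_le_sq _ (norm_nonneg _)
  nlinarith [sq_nonneg ‖H * Z‖]

lemma frobenius_norm_inv_add_smul_one_mul_le [DecidableEq m] {H : Matrix m m ℝ}
    (hH : H.PosSemidef) {ρ : ℝ} (hρ : 0 < ρ) (X : Matrix m n ℝ) :
    ‖(H + ρ • 1)⁻¹ * X‖ ≤ ρ⁻¹ * ‖X‖ := by
  have hdet := hH.isUnit_det_add_smul_one hρ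
  rw [le_inv_mul_iff₀ hρ]
  simpa only [mul_nonsing_inv_cancel_left _ _ hdet] using
    mul_frobenius_norm_le_norm_add_smul_one_mul hH hρ.le ((H + ρ • 1)⁻¹ * X)

end Matrix

/-- Frobenius-norm bound on W - D + V/ρ for the ADMM W-update. -/
theorem W_update_frob_bound {n m : ℕ} (H : Matrix (Fin n) (Fin n) ℝ)
    (hH : H.PosSemidef) (ρ : ℝ) (hρ : 0 < ρ)
    (D V G W : Matrix (Fin n) (Fin m) ℝ)
    (hW : W = (H + ρ • 1)⁻¹ * (G - V + ρ • D)) :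
    frob (W - D + ρ⁻¹ • V) ≤ ρ⁻¹ * (frob (G - H * D) + frob (H * V) / ρ) := by
  rw [hW, inv_add_smul_one_mul_sub_add_smul hρ.ne' (hH.isUnit_det_add_smul_one hρ)]
  simp only [frob_eq_frobenius_norm]
  calc ‖(H + ρ • 1)⁻¹ * (G - H * D + ρ⁻¹ • (H * V))‖
      ≤ ρ⁻¹ * ‖G - H * D + ρ⁻¹ • (H * V)‖ := frobenius_norm_inv_add_smul_one_mul_le hH hρ _
    _ ≤ ρ⁻¹ * (‖G - H * D‖ + ‖H * V‖ / ρ) := by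
      rw [div_eq_inv_mul]
      grw [norm_add_le, norm_smul, Real.norm_of_nonneg (inv_nonneg.mpr hρ.le)]
end

section
/- Let H ∈ ℝ^{n×n} be symmetric positive semidefinite, G ∈ ℝ^{n×m}, ‖H‖ denote the spectral norm, and (ρ_t)_{t≥0} a nondecreasing sequence of positive reals. Suppose sequences (D_t), (V_t) in ℝ^{n×m} satisfy, for all t: ‖V_{t+1}‖_F ≤ ‖G - H D_t‖_F + ‖H V_t‖_F / ρ_t and ‖D_{t+1}‖_F ≤ (1 + 2‖H‖/ρ_t) ‖D_t‖_F + 2‖G‖_F/ρ_t + 2‖H‖ ‖V_t‖_F / ρ_t². Then for all t: ‖D_t‖_F + ‖V_t‖_F/ρ_t ≤ (∏_{s=0}^{t-1} (1 + 3‖H‖/ρ_s)) · (‖D_0‖_F + ‖V_0‖_F/ρ_0 + Σ_{s=0}^{t-1} 3‖G‖_F/ρ_s). -/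
open scoped Classical

/-!
With `a t = ‖D t‖_F + ‖V t‖_F / ρ t`, the bound `‖G - H D‖_F ≤ ‖G‖_F + ‖H‖ ‖D‖_F` (and
`‖H X‖_F ≤ ‖H‖ ‖X‖_F`, applied column by column) turns the recursion for `V` into
`‖V (t+1)‖_F ≤ ‖G‖_F + ‖H‖ ‖D t‖_F + ‖H‖ ‖V t‖_F / ρ t`. Dividing by `ρ (t+1) ≥ ρ t` and adding
the recursion for `D` gives `a (t+1) ≤ (1 + 3‖H‖/ρ t) a t + 3‖G‖_F/ρ t`, and a discrete
Grönwall argument telescopes this linear recursion.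
-/

open scoped Matrix

section Norms

variable {k n m : ℕ}

lemma frob_nonneg (A : Matrix (Fin n) (Fin m) ℝ) : 0 ≤ frob A :=
  Real.sqrt_nonneg _

section Frobenius

attribute [local instance] Matrix.frobeniusSeminormedAddCommGroup

lemma frob_eq_norm (A : Matrix (Fin n) (Fin m) ℝ) : frob A = ‖A‖ := by
  rw [Matrix.frobenius_norm_def, frob, Real.sqrt_eq_rpow]
  simp only [Real.norm_eq_abs]
  norm_num

lemma frob_sub_le (A B : Matrix (Fin n) (Fin m) ℝ) : frob (A - B) ≤ frob A + frob B := by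
  simpa only [frob_eq_norm] using norm_sub_le A B

end Frobenius

lemma frob_sq_eq_sum_norm_sq_col (A : Matrix (Fin n) (Fin m) ℝ) :
    frob A ^ 2 = ∑ j, ‖WithLp.toLp 2 (Aᵀ j)‖ ^ 2 := by
  rw [frob, Real.sq_sqrt (by positivity), Finset.sum_comm]
  simp [EuclideanSpace.norm_sq_eq]

lemma spec_nonneg (H : Matrix (Fin k) (Fin n) ℝ) : 0 ≤ spec H :=
  norm_nonneg _

lemma norm_mulVec_le_spec_mul (H : Matrix (Fin k) (Fin n) ℝ) (x : Fin n → ℝ) :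
    ‖WithLp.toLp 2 (H *ᵥ x)‖ ≤ spec H * ‖WithLp.toLp 2 x‖ := by
  simpa [spec] using (LinearMap.toContinuousLinearMap (Matrix.toEuclideanLin H)).le_opNorm
    (WithLp.toLp 2 x)

lemma frob_mul_le_spec_mul (H : Matrix (Fin k) (Fin n) ℝ) (A : Matrix (Fin n) (Fin m) ℝ) :
    frob (H * A) ≤ spec H * frob A := by
  have hcol : ∀ j, (H * A)ᵀ j = H *ᵥ Aᵀ j := fun j => by
    ext i; simp [Matrix.mul_apply, Matrix.mulVec, dotProduct]
  rw [← pow_le_pow_iff_left₀ (frob_nonneg _) (mul_nonneg (spec_nonneg H) (frob_nonneg A))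
    two_ne_zero, mul_pow, frob_sq_eq_sum_norm_sq_col, frob_sq_eq_sum_norm_sq_col, Finset.mul_sum]
  gcongr with j
  rw [hcol, ← mul_pow]
  gcongr
  exact norm_mulVec_le_spec_mul H _

end Norms

theorem le_prod_mul_add_sum_of_succ_le {a c b : ℕ → ℝ} (hc : ∀ t, 0 ≤ c t)
    (hb : ∀ t, 0 ≤ b t) (h : ∀ t, a (t + 1) ≤ (1 + c t) * a t + b t) (t : ℕ) :
    a t ≤ (∏ s ∈ Finset.range t, (1 + c s)) * (a 0 + ∑ s ∈ Finset.range t, b s) := by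
  induction t with
  | zero => simp
  | succ t ih =>
    have hP : 1 ≤ ∏ s ∈ Finset.range (t + 1), (1 + c s) :=
      Finset.one_le_prod fun s _ => le_add_of_nonneg_right (hc s)
    calc a (t + 1) ≤ (1 + c t) * a t + b t := h t
      _ ≤ (1 + c t) * ((∏ s ∈ Finset.range t, (1 + c s)) * (a 0 + ∑ s ∈ Finset.range t, b s))
          + (∏ s ∈ Finset.range (t + 1), (1 + c s)) * b t := by
        gcongr
        · linarith [hc t]
        · exact le_mul_of_one_le_left (hb t) hP
      _ = _ := by rw [Finset.prod_range_succ, Finset.sum_range_succ]; ring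

theorem add_div_succ_le_of_coupled_bounds {d v d' v' h g ρ ρ' : ℝ} (hρ : 0 < ρ) (hρρ' : ρ ≤ ρ')
    (hv : 0 ≤ v) (hv' : 0 ≤ v') (hV : v' ≤ g + h * d + h * v / ρ)
    (hD : d' ≤ (1 + 2 * h / ρ) * d + 2 * g / ρ + 2 * h * v / ρ ^ 2) :
    d' + v' / ρ' ≤ (1 + 3 * h / ρ) * (d + v / ρ) + 3 * g / ρ := by
  have hv'ρ : v' / ρ' ≤ (g + h * d + h * v / ρ) / ρ :=
    (div_le_div_of_nonneg_left hv' hρ hρρ').trans (by gcongr)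
  have hslack : 0 ≤ v / ρ := by positivity
  have key : (1 + 3 * h / ρ) * (d + v / ρ) + 3 * g / ρ
      = ((1 + 2 * h / ρ) * d + 2 * g / ρ + 2 * h * v / ρ ^ 2)
        + (g + h * d + h * v / ρ) / ρ + v / ρ := by
    field_simp; ring
  linarith

theorem alps_lemma2_general {n m : ℕ} (H : Matrix (Fin n) (Fin n) ℝ)
    (G : Matrix (Fin n) (Fin m) ℝ) (ρ : ℕ → ℝ) (hρ : ∀ t, 0 < ρ t)
    (hmono : Monotone ρ)
    (D V : ℕ → Matrix (Fin n) (Fin m) ℝ)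
    (hV : ∀ t, frob (V (t + 1)) ≤ frob (G - H * D t) + frob (H * V t) / ρ t)
    (hD : ∀ t, frob (D (t + 1))
        ≤ (1 + 2 * spec H / ρ t) * frob (D t) + 2 * frob G / ρ t
          + 2 * spec H * frob (V t) / (ρ t) ^ 2) :
    ∀ t, frob (D t) + frob (V t) / ρ t
      ≤ (∏ s ∈ Finset.range t, (1 + 3 * spec H / ρ s)) *
          (frob (D 0) + frob (V 0) / ρ 0 + ∑ s ∈ Finset.range t, 3 * frob G / ρ s) := by
  have hVt : ∀ t, frob (V (t + 1)) ≤ frob G + spec H * frob (D t) + spec H * frob (V t) / ρ t :=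
    fun t => (hV t).trans <| add_le_add
      ((frob_sub_le _ _).trans (add_le_add le_rfl (frob_mul_le_spec_mul H (D t))))
      (div_le_div_of_nonneg_right (frob_mul_le_spec_mul H (V t)) (hρ t).le)
  refine le_prod_mul_add_sum_of_succ_le (fun t => ?_) (fun t => ?_) fun t =>
    add_div_succ_le_of_coupled_bounds (hρ t) (hmono t.le_succ) (frob_nonneg _) (frob_nonneg _)
      (hVt t) (hD t)
  · have := spec_nonneg H; have := hρ t; positivity
  · have := frob_nonneg G; have := hρ t; positivity

/-- Lemma 2 of the ALPS paper. -/
theorem alps_lemma2 {n m : ℕ} (H : Matrix (Fin n) (Fin n) ℝ) (hH : H.PosSemidef)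
    (G : Matrix (Fin n) (Fin m) ℝ) (ρ : ℕ → ℝ) (hρ : ∀ t, 0 < ρ t)
    (hmono : Monotone ρ)
    (D V : ℕ → Matrix (Fin n) (Fin m) ℝ)
    (hV : ∀ t, frob (V (t + 1)) ≤ frob (G - H * D t) + frob (H * V t) / ρ t)
    (hD : ∀ t, frob (D (t + 1))
        ≤ (1 + 2 * spec H / ρ t) * frob (D t) + 2 * frob G / ρ t
          + 2 * spec H * frob (V t) / (ρ t) ^ 2) :
    ∀ t, frob (D t) + frob (V t) / ρ t
      ≤ (∏ s ∈ Finset.range t, (1 + 3 * spec H / ρ s)) *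
          (frob (D 0) + frob (V 0) / ρ 0 + ∑ s ∈ Finset.range t, 3 * frob G / ρ s) :=
  alps_lemma2_general H G ρ hρ hmono D V hV hD
end

section
/- Let H ∈ ℝ^{n×n} be symmetric positive semidefinite, G, D, V ∈ ℝ^{n×m}, ρ > 0, and define W = (H + ρI)^{-1}(G - V + ρD), D⁺ = P_k(W + V/ρ) (a best k-sparse Frobenius approximation of W + V/ρ), and V⁺ = V + ρ(W - D⁺). If ‖D‖_0 ≤ k, then ‖V⁺‖_F ≤ ‖G - H D‖_F + ‖H V‖_F / ρ. -/
open scoped Classical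

/-!
Since `D` is itself `k`-sparse, optimality of `D⁺` gives
`‖V⁺‖ = ρ ‖D⁺ - (W + V/ρ)‖ ≤ ρ ‖D - (W + V/ρ)‖ = ‖V + ρ (W - D)‖`.
The `W`-update turns `(H + ρ I)(V + ρ (W - D))` into `ρ (G - H D) + H V`, and for `H ⪰ 0`
multiplication by `H + ρ I` enlarges Frobenius norms by a factor at least `ρ`, because
`⟪H M, M⟫ = tr (Mᵀ H M) ≥ 0`.
-/

open Matrix
open scoped InnerProductSpace

theorem norm_le_norm_add_of_inner_nonneg {F : Type*} [SeminormedAddCommGroup F]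
    [InnerProductSpace ℝ F] {x y : F} (h : 0 ≤ ⟪x, y⟫_ℝ) : ‖y‖ ≤ ‖x + y‖ := by
  have := norm_add_sq_real x y
  nlinarith [sq_nonneg ‖x‖, norm_nonneg y, norm_nonneg (x + y)]

theorem admm_dual_update_residual {n m R : Type*} [Fintype n] [DecidableEq n] [CommRing R]
    {H : Matrix n n R} {G D V W : Matrix n m R} {ρ : R}
    (hW : (H + ρ • 1) * W = G - V + ρ • D) :
    (H + ρ • 1) * (V + ρ • (W - D)) = ρ • (G - H * D) + H * V := by
  rw [Matrix.mul_add, Matrix.mul_smul, Matrix.mul_sub, hW, Matrix.add_mul, Matrix.add_mul,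
    Matrix.smul_mul, Matrix.smul_mul, Matrix.one_mul, Matrix.one_mul]
  module

section Frob

variable {n m : ℕ}

noncomputable def frobVec :
    Matrix (Fin n) (Fin m) ℝ →ₗ[ℝ] EuclideanSpace ℝ (Fin n × Fin m) where
  toFun A := WithLp.toLp 2 fun p => A p.1 p.2
  map_add' _ _ := rfl
  map_smul' _ _ := rfl

@[simp]
theorem frobVec_apply (A : Matrix (Fin n) (Fin m) ℝ) (p : Fin n × Fin m) :
    frobVec A p = A p.1 p.2 :=
  rfl

theorem frob_eq_norm_frobVec (A : Matrix (Fin n) (Fin m) ℝ) : frob A = ‖frobVec A‖ := by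
  rw [EuclideanSpace.norm_eq, frob, Fintype.sum_prod_type]
  simp

theorem frob_neg (A : Matrix (Fin n) (Fin m) ℝ) : frob (-A) = frob A := by
  rw [frob_eq_norm_frobVec, frob_eq_norm_frobVec, map_neg, norm_neg]

theorem frob_smul (c : ℝ) (A : Matrix (Fin n) (Fin m) ℝ) : frob (c • A) = |c| * frob A := by
  rw [frob_eq_norm_frobVec, frob_eq_norm_frobVec, map_smul, norm_smul, Real.norm_eq_abs]

theorem frob_add_le (A B : Matrix (Fin n) (Fin m) ℝ) : frob (A + B) ≤ frob A + frob B := by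
  simpa only [frob_eq_norm_frobVec, map_add] using norm_add_le (frobVec A) (frobVec B)

theorem inner_frobVec (A B : Matrix (Fin n) (Fin m) ℝ) :
    ⟪frobVec A, frobVec B⟫_ℝ = (Aᵀ * B).trace := by
  rw [PiLp.inner_apply, Fintype.sum_prod_type, Finset.sum_comm]
  simp [trace, mul_apply, mul_comm]

theorem Matrix.PosSemidef.inner_frobVec_mul_nonneg {H : Matrix (Fin n) (Fin n) ℝ}
    (hH : H.PosSemidef) (M : Matrix (Fin n) (Fin m) ℝ) :
    0 ≤ ⟪frobVec (H * M), frobVec M⟫_ℝ := by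
  rw [real_inner_comm, inner_frobVec, ← Matrix.mul_assoc, ← conjTranspose_eq_transpose_of_trivial]
  exact (hH.conjTranspose_mul_mul_same M).trace_nonneg

theorem Matrix.PosSemidef.mul_frob_le_frob_add_smul_one_mul {H : Matrix (Fin n) (Fin n) ℝ}
    (hH : H.PosSemidef) {ρ : ℝ} (hρ : 0 ≤ ρ) (M : Matrix (Fin n) (Fin m) ℝ) :
    ρ * frob M ≤ frob ((H + ρ • 1) * M) := by
  have hinner : 0 ≤ ⟪frobVec (H * M), frobVec (ρ • M)⟫_ℝ := by
    rw [map_smul, inner_smul_right]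
    exact mul_nonneg hρ (hH.inner_frobVec_mul_nonneg M)
  calc ρ * frob M = frob (ρ • M) := by rw [frob_smul, abs_of_nonneg hρ]
    _ ≤ frob (H * M + ρ • M) := by
      simpa only [frob_eq_norm_frobVec, map_add] using norm_le_norm_add_of_inner_nonneg hinner
    _ = frob ((H + ρ • 1) * M) := by rw [Matrix.add_mul, Matrix.smul_mul, Matrix.one_mul]

end Frob

theorem alps_lemma1_V_bound_general {n m k : ℕ} (H : Matrix (Fin n) (Fin n) ℝ)
    (hH : H.PosSemidef) (G D V : Matrix (Fin n) (Fin m) ℝ)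
    (ρ : ℝ) (hρ : 0 < ρ) (hD : l0 D ≤ k)
    (W Dplus Vplus : Matrix (Fin n) (Fin m) ℝ)
    (hWdef : W = (H + ρ • 1)⁻¹ * (G - V + ρ • D))
    (hDplus_best : ∀ B : Matrix (Fin n) (Fin m) ℝ, l0 B ≤ k →
      frob (Dplus - (W + ρ⁻¹ • V)) ≤ frob (B - (W + ρ⁻¹ • V)))
    (hVplus : Vplus = V + ρ • (W - Dplus)) :
    frob Vplus ≤ frob (G - H * D) + frob (H * V) / ρ := by
  have hA : IsUnit (H + ρ • 1).det :=
    (isUnit_iff_isUnit_det _).mp (PosDef.posSemidef_add hH (PosDef.one.smul hρ)).isUnit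
  have hAW : (H + ρ • 1) * W = G - V + ρ • D := hWdef ▸ mul_nonsing_inv_cancel_left _ _ hA
  have hdist (X : Matrix (Fin n) (Fin m) ℝ) :
      frob (V + ρ • (W - X)) = ρ * frob (X - (W + ρ⁻¹ • V)) := by
    have hneg : ρ • (X - (W + ρ⁻¹ • V)) = -(V + ρ • (W - X)) := by
      rw [smul_sub, smul_add, smul_inv_smul₀ hρ.ne', smul_sub]
      abel
    rw [← frob_neg, ← hneg, frob_smul, abs_of_pos hρ]
  calc frob Vplus = ρ * frob (Dplus - (W + ρ⁻¹ • V)) := by rw [hVplus, hdist]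
    _ ≤ ρ * frob (D - (W + ρ⁻¹ • V)) := by gcongr; exact hDplus_best D hD
    _ = frob (V + ρ • (W - D)) := (hdist D).symm
    _ ≤ ρ⁻¹ * frob ((H + ρ • 1) * (V + ρ • (W - D))) :=
        (le_inv_mul_iff₀ hρ).mpr (hH.mul_frob_le_frob_add_smul_one_mul hρ.le _)
    _ ≤ ρ⁻¹ * (ρ * frob (G - H * D) + frob (H * V)) := by
        rw [admm_dual_update_residual hAW]
        gcongr
        simpa only [frob_smul, abs_of_pos hρ] using frob_add_le (ρ • (G - H * D)) (H * V)
    _ = frob (G - H * D) + frob (H * V) / ρ := by field_simp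

/-- first conclusion of Lemma 1 of the ALPS paper. -/
theorem alps_lemma1_V_bound {n m k : ℕ} (H : Matrix (Fin n) (Fin n) ℝ)
    (hH : H.PosSemidef) (G D V : Matrix (Fin n) (Fin m) ℝ)
    (ρ : ℝ) (hρ : 0 < ρ) (hD : l0 D ≤ k)
    (W Dplus Vplus : Matrix (Fin n) (Fin m) ℝ)
    (hWdef : W = (H + ρ • 1)⁻¹ * (G - V + ρ • D))
    (hDplus_sparse : l0 Dplus ≤ k)
    (hDplus_best : ∀ B : Matrix (Fin n) (Fin m) ℝ, l0 B ≤ k →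
      frob (Dplus - (W + ρ⁻¹ • V)) ≤ frob (B - (W + ρ⁻¹ • V)))
    (hVplus : Vplus = V + ρ • (W - Dplus)) :
    frob Vplus ≤ frob (G - H * D) + frob (H * V) / ρ :=
  alps_lemma1_V_bound_general H hH G D V ρ hρ hD W Dplus Vplus hWdef hDplus_best hVplus
end
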